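/- arXiv:2204.11423 — 2 statements merged into one kernel-verified Lean document; each statement's English description precedes it below -/
import Mathlib

section
/- (Proposition 3.2, intermediate bound) Let Mᵒ = (bᵒ, uᵒ) and Mᵃ = (bᵃ, uᵃ) be subjective opinions over K classes whose conflict C satisfies C < 1, let (b, u) be their reduced Dempster combination, fix t : Fin K, and let bₘᵃ be the maximum of bᵃ k over k : Fin K. Then bᵒ t − b t ≤ bᵒ t − bᵒ t * uᵃ / (bₘᵃ + uᵃ + uᵒ − uᵃ * uᵒ), provided bₘᵃ + uᵃ + uᵒ − uᵃ * uᵒ > 0. -/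
open Finset

/-- The conflict between two belief-mass assignments: `C = ∑_{i ≠ j} b₁ i * b₂ j`. -/
noncomputable def conflict {K : ℕ} (b₁ b₂ : Fin K → ℝ) : ℝ :=
  ∑ i, ∑ j ∈ univ.filter (fun j => j ≠ i), b₁ i * b₂ j

/-- The belief masses of the reduced Dempster combination:
`b k = (b¹ k * b² k + b¹ k * u² + b² k * u¹) / (1 − C)`. -/
noncomputable def combBelief {K : ℕ} (b₁ b₂ : Fin K → ℝ) (u₁ u₂ : ℝ) (k : Fin K) : ℝ :=
  (b₁ k * b₂ k + b₁ k * u₂ + b₂ k * u₁) / (1 - conflict b₁ b₂)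

/-- The uncertainty mass of the reduced Dempster combination: `u = u¹ * u² / (1 − C)`. -/
noncomputable def combUncertainty {K : ℕ} (b₁ b₂ : Fin K → ℝ) (u₁ u₂ : ℝ) : ℝ :=
  (u₁ * u₂) / (1 - conflict b₁ b₂)

/-!
The combined belief in `t` is at least `bᵒ t * uᵃ / (1 - C)`, so it suffices to bound the
normaliser `1 - C` by `bₘᵃ + uᵃ + uᵒ - uᵃ uᵒ`. Summing over all pairs instead of off-diagonal
ones gives `1 - C = 1 - (1 - uᵒ)(1 - uᵃ) + ∑ₖ bᵒ k bᵃ k`, and the diagonal sum is at most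
`bₘᵃ ∑ₖ bᵒ k = bₘᵃ (1 - uᵒ) ≤ bₘᵃ`.
-/

theorem conflict_eq_sum_mul_sum_sub {K : ℕ} (b₁ b₂ : Fin K → ℝ) :
    conflict b₁ b₂ = (∑ k, b₁ k) * (∑ k, b₂ k) - ∑ k, b₁ k * b₂ k := by
  have off_diagonal (i : Fin K) : ∑ j ∈ univ.filter (fun j => j ≠ i), b₁ i * b₂ j
      = b₁ i * ∑ j, b₂ j - b₁ i * b₂ i := by
    rw [← mul_sum, filter_ne', sum_erase_eq_sub (mem_univ i), mul_sub]
  simp only [conflict, off_diagonal, sum_sub_distrib, sum_mul]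

theorem sum_mul_le_mul_sum_of_le {ι : Type*} [Fintype ι] {b₁ b₂ : ι → ℝ} {m : ℝ}
    (hb₁ : ∀ k, 0 ≤ b₁ k) (hb₂ : ∀ k, b₂ k ≤ m) :
    ∑ k, b₁ k * b₂ k ≤ m * ∑ k, b₁ k := by
  rw [mul_sum]
  exact sum_le_sum fun k _ => by
    rw [mul_comm m]
    exact mul_le_mul_of_nonneg_left (hb₂ k) (hb₁ k)

theorem one_sub_conflict_le {K : ℕ} {bo ba : Fin K → ℝ} {uo ua bm : ℝ}
    (hbo : ∀ k, 0 ≤ bo k) (huo : 0 ≤ uo) (hso : uo + ∑ k, bo k = 1)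
    (hsa : ua + ∑ k, ba k = 1) (hbm : ∀ k, ba k ≤ bm) (hbm₀ : 0 ≤ bm) :
    1 - conflict bo ba ≤ bm + ua + uo - ua * uo := by
  have diagonal := sum_mul_le_mul_sum_of_le hbo hbm
  rw [conflict_eq_sum_mul_sum_sub, eq_sub_of_add_eq' hsa, eq_sub_of_add_eq' hso]
  rw [eq_sub_of_add_eq' hso] at diagonal
  nlinarith [mul_nonneg hbm₀ huo]

theorem comb_belief_degradation_intermediate_bound_general (K : ℕ)
    (bo ba : Fin K → ℝ) (uo ua : ℝ)
    (hbo : ∀ k, 0 ≤ bo k) (huo : 0 ≤ uo) (hso : uo + ∑ k, bo k = 1)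
    (hba : ∀ k, 0 ≤ ba k) (hua : 0 ≤ ua) (hsa : ua + ∑ k, ba k = 1)
    (hC : conflict bo ba < 1) (t : Fin K)
    (bm : ℝ) (hbm : IsGreatest (Set.range ba) bm) :
    bo t - combBelief bo ba uo ua t ≤
      bo t - bo t * ua / (bm + ua + uo - ua * uo) := by
  obtain ⟨⟨s, rfl⟩, hmax⟩ := hbm
  have hnorm : 0 < 1 - conflict bo ba := sub_pos.mpr hC
  have hden := one_sub_conflict_le hbo huo hso hsa (fun k => hmax ⟨k, rfl⟩) (hba s)
  have hnum : bo t * ua ≤ bo t * ba t + bo t * ua + ba t * uo := by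
    linarith [mul_nonneg (hbo t) (hba t), mul_nonneg (hba t) huo]
  suffices bo t * ua / (ba s + ua + uo - ua * uo) ≤ combBelief bo ba uo ua t by linarith
  calc bo t * ua / (ba s + ua + uo - ua * uo)
      ≤ bo t * ua / (1 - conflict bo ba) :=
        div_le_div_of_nonneg_left (mul_nonneg (hbo t) hua) hnorm hden
    _ ≤ combBelief bo ba uo ua t := div_le_div_of_nonneg_right hnum hnorm.le

/-- Proposition 3.2, intermediate bound: with `bm` the maximum belief mass of
the additional opinion, `bᵒ t − b t ≤ bᵒ t − bᵒ t * uᵃ / (bm + uᵃ + uᵒ − uᵃ * uᵒ)`. -/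
theorem comb_belief_degradation_intermediate_bound (K : ℕ) (hK : 1 ≤ K)
    (bo ba : Fin K → ℝ) (uo ua : ℝ)
    (hbo : ∀ k, 0 ≤ bo k) (huo : 0 ≤ uo) (hso : uo + ∑ k, bo k = 1)
    (hba : ∀ k, 0 ≤ ba k) (hua : 0 ≤ ua) (hsa : ua + ∑ k, ba k = 1)
    (hC : conflict bo ba < 1) (t : Fin K)
    (bm : ℝ) (hbm : IsGreatest (Set.range ba) bm)
    (hpos : 0 < bm + ua + uo - ua * uo) :
    bo t - combBelief bo ba uo ua t ≤
      bo t - bo t * ua / (bm + ua + uo - ua * uo) :=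
  comb_belief_degradation_intermediate_bound_general K bo ba uo ua hbo huo hso hba hua hsa hC t bm
    hbm
end

section
/- (Proposition 3.3, sharper intermediate bound) Let Mᵒ = (bᵒ, uᵒ) and Mᵃ = (bᵃ, uᵃ) be subjective opinions over K classes whose conflict C satisfies C < 1, let (b, u) be their reduced Dempster combination, and assume uᵃ + uᵒ − uᵒ * uᵃ > 0. Then u ≤ uᵒ * uᵃ / (uᵃ + uᵒ − uᵒ * uᵃ). -/
/-!
Since the beliefs of each opinion sum to `1 - u`, the normaliser of the combination is
`1 - C = uᵃ + uᵒ - uᵒ uᵃ + ∑ₖ bᵒ k bᵃ k`, which is at least `uᵃ + uᵒ - uᵒ uᵃ` because the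
agreement term `∑ₖ bᵒ k bᵃ k` is non-negative.
-/

open Finset

theorem conflict_eq_sum_mul_sum_sub_sum_mul {K : ℕ} (b₁ b₂ : Fin K → ℝ) :
    conflict b₁ b₂ = (∑ i, b₁ i) * (∑ j, b₂ j) - ∑ i, b₁ i * b₂ i := by
  rw [conflict, sum_mul, ← sum_sub_distrib]
  refine sum_congr rfl fun i _ => ?_
  rw [← mul_sum, filter_ne', sum_erase_eq_sub (mem_univ i)]
  ring

theorem one_sub_conflict_eq {K : ℕ} {b₁ b₂ : Fin K → ℝ} {u₁ u₂ : ℝ}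
    (hs₁ : u₁ + ∑ k, b₁ k = 1) (hs₂ : u₂ + ∑ k, b₂ k = 1) :
    1 - conflict b₁ b₂ = u₂ + u₁ - u₁ * u₂ + ∑ k, b₁ k * b₂ k := by
  rw [conflict_eq_sum_mul_sum_sub_sum_mul, eq_sub_of_add_eq' hs₁, eq_sub_of_add_eq' hs₂]
  ring

theorem le_one_sub_conflict {K : ℕ} {b₁ b₂ : Fin K → ℝ} {u₁ u₂ : ℝ}
    (hb₁ : ∀ k, 0 ≤ b₁ k) (hs₁ : u₁ + ∑ k, b₁ k = 1)
    (hb₂ : ∀ k, 0 ≤ b₂ k) (hs₂ : u₂ + ∑ k, b₂ k = 1) :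
    u₂ + u₁ - u₁ * u₂ ≤ 1 - conflict b₁ b₂ := by
  rw [one_sub_conflict_eq hs₁ hs₂, le_add_iff_nonneg_right]
  exact sum_nonneg fun k _ => mul_nonneg (hb₁ k) (hb₂ k)

theorem comb_uncertainty_sharper_bound_general (K : ℕ)
    (bo ba : Fin K → ℝ) (uo ua : ℝ)
    (hbo : ∀ k, 0 ≤ bo k) (huo : 0 ≤ uo) (hso : uo + ∑ k, bo k = 1)
    (hba : ∀ k, 0 ≤ ba k) (hua : 0 ≤ ua) (hsa : ua + ∑ k, ba k = 1)
    (hpos : 0 < ua + uo - uo * ua) :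
    combUncertainty bo ba uo ua ≤ uo * ua / (ua + uo - uo * ua) :=
  div_le_div_of_nonneg_left (mul_nonneg huo hua) hpos
    (le_one_sub_conflict hbo hso hba hsa)

/-- Proposition 3.3, sharper intermediate bound:
`u ≤ uᵒ * uᵃ / (uᵃ + uᵒ − uᵒ * uᵃ)`. -/
theorem comb_uncertainty_sharper_bound (K : ℕ) (hK : 1 ≤ K)
    (bo ba : Fin K → ℝ) (uo ua : ℝ)
    (hbo : ∀ k, 0 ≤ bo k) (huo : 0 ≤ uo) (hso : uo + ∑ k, bo k = 1)
    (hba : ∀ k, 0 ≤ ba k) (hua : 0 ≤ ua) (hsa : ua + ∑ k, ba k = 1)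
    (hC : conflict bo ba < 1)
    (hpos : 0 < ua + uo - uo * ua) :
    combUncertainty bo ba uo ua ≤ uo * ua / (ua + uo - uo * ua) :=
  comb_uncertainty_sharper_bound_general K bo ba uo ua hbo huo hso hba hua hsa hpos
end
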